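/- arXiv:1601.00456 — 2 statements merged into one kernel-verified Lean document; each statement's English description precedes it below -/
import Mathlib

section
/- A pure one-dimensional simplicial complex Δ is connected if and only if Δ is shellable. -/
open Finset

/-- An (abstract) simplicial complex on vertex set `V`: a downward closed
family of finite subsets of `V`. -/
structure SimplicialComplex (V : Type*) where
  faces : Set (Finset V)
  down_closed : ∀ ⦃F G : Finset V⦄, F ∈ faces → G ⊆ F → G ∈ faces

namespace SimplicialComplex

variable {V : Type*}

/-- A facet is a maximal face. -/
def IsFacet (Δ : SimplicialComplex V) (F : Finset V) : Prop :=
  F ∈ Δ.faces ∧ ∀ G ∈ Δ.faces, F ⊆ G → F = G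

/-- The deletion `del_Δ(x)`. -/
def del [DecidableEq V] (Δ : SimplicialComplex V) (x : V) : SimplicialComplex V where
  faces := {F | F ∈ Δ.faces ∧ x ∉ F}
  down_closed := fun _F _G hF hG => ⟨Δ.down_closed hF.1 hG, fun hx => hF.2 (hG hx)⟩

/-- The link `lk_Δ(x)`. -/
def link [DecidableEq V] (Δ : SimplicialComplex V) (x : V) : SimplicialComplex V where
  faces := {F | x ∉ F ∧ insert x F ∈ Δ.faces}
  down_closed := fun _F _G hF hG =>
    ⟨fun hx => hF.1 (hG hx), Δ.down_closed hF.2 (Finset.insert_subset_insert x hG)⟩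

/-- The simplex `⟨F⟩` on a finite vertex set `F`. -/
def simplex (F : Finset V) : SimplicialComplex V where
  faces := {G | G ⊆ F}
  down_closed := fun _ _ hF hG => hG.trans hF

/-- Vertex decomposability (non-pure sense). -/
inductive IsVertexDecomposable [DecidableEq V] : SimplicialComplex V → Prop
  | simplex (Δ : SimplicialComplex V) (F : Finset V) (h : Δ.faces = {G | G ⊆ F}) :
      IsVertexDecomposable Δ
  | shed (Δ : SimplicialComplex V) (x : V)
      (hdel : IsVertexDecomposable (Δ.del x))
      (hlink : IsVertexDecomposable (Δ.link x))
      (hfacet : ∀ F, (Δ.del x).IsFacet F → Δ.IsFacet F) :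
      IsVertexDecomposable Δ

/-- Shellability (non-pure sense): an ordering `F 0 < F 1 < ⋯` of all the
facets such that for `i < j` there are `v ∈ F j \ F i` and `l < j` with
`F j \ F l = {v}`. -/
def IsShellable [DecidableEq V] (Δ : SimplicialComplex V) : Prop :=
  ∃ (m : ℕ) (F : Fin m → Finset V),
    Function.Injective F ∧
    (∀ G, Δ.IsFacet G ↔ ∃ i, F i = G) ∧
    ∀ i j : Fin m, i < j → ∃ v ∈ F j, v ∉ F i ∧ ∃ l, l < j ∧ F j \ F l = {v}

/-- A simplicial complex is pure if all facets have the same cardinality. -/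
def IsPure (Δ : SimplicialComplex V) : Prop :=
  ∀ F G, Δ.IsFacet F → Δ.IsFacet G → F.card = G.card

/-- The `(s 0, …, s (n-1))`-expansion of a simplicial complex on `{x_0, …, x_(n-1)}`.
The vertex `x_{ij}` (for `1 ≤ j ≤ s i`) is encoded as the pair `(i, s i - j)`;
so the copies of `x i` are the pairs `(i, r)` with `r < s i`.  The faces are
exactly the subsets of the sets `{x_{i₁ r₁}, …, x_{i_k r_k}}` where
`{x_{i₁}, …, x_{i_k}}` is a face (equivalently, a facet) of `Δ`. -/
def expansion {n : ℕ} (Δ : SimplicialComplex (Fin n)) (s : Fin n → ℕ) :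
    SimplicialComplex (Fin n × ℕ) where
  faces := {E | E.image Prod.fst ∈ Δ.faces ∧ (∀ p ∈ E, p.2 < s p.1) ∧
    ∀ p ∈ E, ∀ q ∈ E, p.1 = q.1 → p = q}
  down_closed := fun _E _G hE hG =>
    ⟨Δ.down_closed hE.1 (Finset.image_subset_image hG),
     fun p hp => hE.2.1 p (hG hp),
     fun p hp q hq => hE.2.2 p (hG hp) q (hG hq)⟩

/-- Restriction of a simplicial complex to a subtype of the vertices. -/
def restrict (Δ : SimplicialComplex V) (P : V → Prop) : SimplicialComplex {v // P v} where
  faces := {F | F.map (Function.Embedding.subtype P) ∈ Δ.faces}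
  down_closed := fun _F _G hF hG =>
    Δ.down_closed hF (Finset.map_subset_map.mpr hG)

end SimplicialComplex

namespace SimplicialComplex

/-- A simplicial complex is connected if any two of its vertices are joined by
a path of edges (faces with two elements). -/
def IsConnected [DecidableEq V] (Δ : SimplicialComplex V) : Prop :=
  ∀ x y : V, ({x} : Finset V) ∈ Δ.faces → ({y} : Finset V) ∈ Δ.faces →
    Relation.ReflTransGen (fun a b => ({a, b} : Finset V) ∈ Δ.faces) x y

end SimplicialComplex


/-!
When all facets are edges, the shelling condition for `i < j` just asks that `F j` meet some
earlier facet: if it meets `F i`, take `l = i`; otherwise the vertex of `F j` outside a meeting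
earlier `F l` also lies outside `F i`. So shellability means the facets can be listed so that
each one meets an earlier one. Along such a listing every vertex is joined to the first facet,
which gives connectedness. Conversely, in a connected complex a path from inside to outside the
union of a proper set of facets leaves it along an edge, which is a facet meeting the set, so
such a listing can be built greedily.
-/

section ConnectedOrdering

variable {α : Type*}

def IsConnectedOrdering (r : α → α → Prop) {m : ℕ} (f : Fin m → α) : Prop :=
  ∀ j : Fin m, 0 < (j : ℕ) → ∃ l < j, r (f j) (f l)

theorem Relation.ReflTransGen.exists_boundary {r : α → α → Prop} {p : α → Prop} {a b : α}
    (h : Relation.ReflTransGen r a b) (ha : p a) (hb : ¬ p b) : ∃ x y, p x ∧ ¬ p y ∧ r x y := by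
  induction h with
  | refl => exact absurd ha hb
  | @tail c d _ hcd ih =>
    by_cases hc : p c
    · exact ⟨c, d, hc, hb, hcd⟩
    · exact ih hc

theorem IsConnectedOrdering.snoc {r : α → α → Prop} {k : ℕ} {f : Fin k → α}
    (hf : IsConnectedOrdering r f) {x : α} (hx : 0 < k → ∃ i, r x (f i)) :
    IsConnectedOrdering r (Fin.snoc f x : Fin (k + 1) → α) := by
  intro j hj
  induction j using Fin.lastCases with
  | last =>
    obtain ⟨l, hl⟩ := hx (by simpa using hj)
    exact ⟨l.castSucc, Fin.castSucc_lt_last l, by simpa using hl⟩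
  | cast j =>
    obtain ⟨l, hlj, hl⟩ := hf j (by simpa using hj)
    exact ⟨l.castSucc, Fin.castSucc_lt_castSucc_iff.mpr hlj, by simpa using hl⟩

theorem Finset.exists_embedding_fin_isConnectedOrdering [DecidableEq α] {r : α → α → Prop}
    {s : Finset α} (hs : ∀ t ⊆ s, t.Nonempty → t ≠ s → ∃ x ∈ s \ t, ∃ y ∈ t, r x y) :
    ∃ f : Fin s.card ↪ α, Set.range f = s ∧ IsConnectedOrdering r f := by
  suffices key : ∀ k ≤ s.card, ∃ f : Fin k ↪ α, Finset.univ.map f ⊆ s ∧ IsConnectedOrdering r f by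
    obtain ⟨f, hfs, hf⟩ := key s.card le_rfl
    refine ⟨f, ?_, hf⟩
    have hmap : Finset.univ.map f = s := Finset.eq_of_subset_of_card_le hfs (by simp)
    rw [← Finset.coe_inj.mpr hmap]
    simp
  intro k
  induction k with
  | zero => exact fun _ => ⟨Function.Embedding.ofIsEmpty, by simp, fun i => i.elim0⟩
  | succ k ih =>
    intro hk
    obtain ⟨f, hfs, hf⟩ := ih (by omega)
    set t := Finset.univ.map f
    have htcard : t.card = k := by simp [t]
    obtain ⟨x, hx, hxf⟩ : ∃ x ∈ s \ t, 0 < k → ∃ i, r x (f i) := by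
      rcases t.eq_empty_or_nonempty with ht | ht
      · obtain ⟨x, hx⟩ := Finset.card_pos.mp (by omega : 0 < s.card)
        exact ⟨x, by simp [ht, hx], fun hk => by simp [← htcard, ht] at hk⟩
      · obtain ⟨x, hx, y, hy, hxy⟩ := hs t hfs ht (by rintro rfl; omega)
        obtain ⟨i, -, rfl⟩ := Finset.mem_map.mp hy
        exact ⟨x, hx, fun _ => ⟨i, hxy⟩⟩
    have hx_range : x ∉ Set.range f := by simpa [t] using (Finset.mem_sdiff.mp hx).2
    refine ⟨Fin.Embedding.snoc f hx_range, ?_, ?_⟩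
    · intro y hy
      simp only [Finset.mem_map, Finset.mem_univ, true_and] at hy
      obtain ⟨i, rfl⟩ := hy
      induction i using Fin.lastCases with
      | last => simpa [Fin.Embedding.snoc_last] using (Finset.mem_sdiff.mp hx).1
      | cast i => simpa [Fin.Embedding.snoc_castSucc] using hfs (by simp [t])
    · rw [Fin.Embedding.coe_snoc]
      exact hf.snoc hxf

end ConnectedOrdering

theorem Finset.card_sdiff_eq_one_of_card_eq_two {α : Type*} [DecidableEq α] {s t : Finset α}
    (hs : s.card = 2) (ht : t.card = 2) (hst : s ≠ t) (h : (s ∩ t).Nonempty) :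
    (s \ t).card = 1 := by
  have hsub : ¬ s ⊆ t := fun hsub => hst (Finset.eq_of_subset_of_card_le hsub (by omega))
  have hsdiff := Finset.card_pos.mpr (Finset.sdiff_nonempty.mpr hsub)
  have hinter := Finset.card_pos.mpr h
  have := Finset.card_sdiff_add_card_inter s t
  omega

theorem Finset.inter_nonempty_of_card_sdiff_eq_one {α : Type*} [DecidableEq α] {s t : Finset α}
    (hs : 1 < s.card) (h : (s \ t).card = 1) : (s ∩ t).Nonempty := by
  have := Finset.card_sdiff_add_card_inter s t
  exact Finset.card_pos.mp (by omega)

namespace SimplicialComplex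

variable {V : Type*} {Δ : SimplicialComplex V}

def Adj [DecidableEq V] (Δ : SimplicialComplex V) (a b : V) : Prop :=
  ({a, b} : Finset V) ∈ Δ.faces

theorem adj_of_mem [DecidableEq V] {F : Finset V} (hF : F ∈ Δ.faces) {a b : V} (ha : a ∈ F)
    (hb : b ∈ F) : Δ.Adj a b :=
  Δ.down_closed hF (Finset.insert_subset ha (Finset.singleton_subset_iff.mpr hb))

instance [DecidableEq V] : Std.Symm Δ.Adj where
  symm a b h := by rwa [Adj, Finset.pair_comm]

theorem exists_isFacet_superset [Finite V] {F : Finset V} (hF : F ∈ Δ.faces) :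
    ∃ G, Δ.IsFacet G ∧ F ⊆ G := by
  obtain ⟨G, hFG, hG⟩ := (Set.toFinite Δ.faces).exists_le_maximal hF
  exact ⟨G, ⟨hG.prop, fun H hH hGH => le_antisymm hGH (hG.le_of_ge hH hGH)⟩, hFG⟩

theorem isFacet_of_card_eq [Finite V] {d : ℕ} (hpure : ∀ F, Δ.IsFacet F → F.card = d)
    {E : Finset V} (hE : E ∈ Δ.faces) (hcard : E.card = d) : Δ.IsFacet E := by
  obtain ⟨G, hG, hEG⟩ := exists_isFacet_superset hE
  rwa [Finset.eq_of_subset_of_card_le hEG (by rw [hpure G hG, hcard])]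

theorem shelling_condition_iff_isConnectedOrdering [DecidableEq V] {m : ℕ}
    {F : Fin m → Finset V} (hinj : Function.Injective F) (hcard : ∀ i, (F i).card = 2) :
    (∀ i j : Fin m, i < j → ∃ v ∈ F j, v ∉ F i ∧ ∃ l, l < j ∧ F j \ F l = {v}) ↔
      IsConnectedOrdering (fun E E' => (E ∩ E').Nonempty) F := by
  constructor
  · intro hshell j hj
    obtain ⟨_, _, _, l, hlj, hl⟩ := hshell ⟨0, by omega⟩ j hj
    exact ⟨l, hlj, Finset.inter_nonempty_of_card_sdiff_eq_one (by rw [hcard]; norm_num)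
      (by rw [hl, Finset.card_singleton])⟩
  · have hsdiff : ∀ {j l : Fin m}, l < j → (F j ∩ F l).Nonempty → ∃ v, F j \ F l = {v} :=
      fun hlj hjl => Finset.card_eq_one.mp <| Finset.card_sdiff_eq_one_of_card_eq_two
        (hcard _) (hcard _) (hinj.ne hlj.ne') hjl
    intro hord i j hij
    by_cases hji : (F j ∩ F i).Nonempty
    · obtain ⟨v, hv⟩ := hsdiff hij hji
      have hv' : v ∈ F j \ F i := hv ▸ Finset.mem_singleton_self v
      exact ⟨v, (Finset.mem_sdiff.mp hv').1, (Finset.mem_sdiff.mp hv').2, i, hij, hv⟩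
    · obtain ⟨l, hlj, hjl⟩ := hord j ((Nat.zero_le _).trans_lt hij)
      obtain ⟨v, hv⟩ := hsdiff hlj hjl
      have hvj : v ∈ F j := (Finset.mem_sdiff.mp (hv ▸ Finset.mem_singleton_self v)).1
      exact ⟨v, hvj, fun hvi => hji ⟨v, Finset.mem_inter.mpr ⟨hvj, hvi⟩⟩, l, hlj, hv⟩

theorem isShellable_iff_exists_isConnectedOrdering [DecidableEq V]
    (hpure : ∀ F, Δ.IsFacet F → F.card = 2) :
    Δ.IsShellable ↔ ∃ (m : ℕ) (F : Fin m → Finset V), Function.Injective F ∧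
      (∀ G, Δ.IsFacet G ↔ ∃ i, F i = G) ∧
        IsConnectedOrdering (fun E E' => (E ∩ E').Nonempty) F := by
  refine exists_congr fun m => exists_congr fun F => and_congr_right fun hinj =>
    and_congr_right fun hfacets => ?_
  exact shelling_condition_iff_isConnectedOrdering hinj
    fun i => hpure _ ((hfacets _).mpr ⟨i, rfl⟩)

theorem exists_reflTransGen_adj_of_isConnectedOrdering [DecidableEq V] {m : ℕ}
    {F : Fin m → Finset V} (hfaces : ∀ i, F i ∈ Δ.faces)
    (hord : IsConnectedOrdering (fun E E' => (E ∩ E').Nonempty) F) (j : Fin m) :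
    ∀ y ∈ F j, ∃ a ∈ F ⟨0, j.pos⟩, Relation.ReflTransGen Δ.Adj y a := by
  induction j using WellFoundedLT.induction with
  | ind j ih =>
    intro y hy
    rcases Nat.eq_zero_or_pos j with hj | hj
    · exact ⟨y, by rwa [show (⟨0, j.pos⟩ : Fin m) = j from Fin.ext hj.symm], .refl⟩
    obtain ⟨l, hlj, w, hw⟩ := hord j hj
    obtain ⟨a, ha, hwa⟩ := ih l hlj w (Finset.mem_inter.mp hw).2
    exact ⟨a, ha, .head (adj_of_mem (hfaces j) hy (Finset.mem_inter.mp hw).1) hwa⟩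

theorem isConnected_of_isConnectedOrdering [Finite V] [DecidableEq V] {m : ℕ}
    {F : Fin m → Finset V} (hfacets : ∀ G, Δ.IsFacet G ↔ ∃ i, F i = G)
    (hord : IsConnectedOrdering (fun E E' => (E ∩ E').Nonempty) F) : Δ.IsConnected := by
  have hfaces i : F i ∈ Δ.faces := ((hfacets _).mpr ⟨i, rfl⟩).1
  have hvertex {x : V} (hx : {x} ∈ Δ.faces) : ∃ i, x ∈ F i := by
    obtain ⟨G, hG, hxG⟩ := exists_isFacet_superset hx
    obtain ⟨i, rfl⟩ := (hfacets G).mp hG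
    exact ⟨i, Finset.singleton_subset_iff.mp hxG⟩
  intro x y hx hy
  obtain ⟨i, hxi⟩ := hvertex hx
  obtain ⟨j, hyj⟩ := hvertex hy
  obtain ⟨a, ha, hxa⟩ := exists_reflTransGen_adj_of_isConnectedOrdering hfaces hord i x hxi
  obtain ⟨b, hb, hyb⟩ := exists_reflTransGen_adj_of_isConnectedOrdering hfaces hord j y hyj
  show Relation.ReflTransGen Δ.Adj x y
  exact hxa.trans (.head (adj_of_mem (hfaces _) ha hb) (symm hyb))

theorem IsConnected.exists_mem_sdiff_inter_nonempty [Finite V] [DecidableEq V]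
    (hconn : Δ.IsConnected) (hpure : ∀ F, Δ.IsFacet F → F.card = 2)
    {s : Finset (Finset V)} (hs : ∀ E, E ∈ s ↔ Δ.IsFacet E) :
    ∀ t ⊆ s, t.Nonempty → t ≠ s → ∃ E ∈ s \ t, ∃ E' ∈ t, (E ∩ E').Nonempty := by
  intro t hts ⟨E₀, hE₀⟩ hne
  obtain ⟨E₁, hE₁⟩ := Finset.sdiff_nonempty.mpr fun hst => hne (hts.antisymm hst)
  have hvertex {E : Finset V} (hE : E ∈ s) : ∃ a, {a} ∈ Δ.faces ∧ a ∈ E := by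
    obtain ⟨a, ha⟩ := Finset.card_pos.mp (by rw [hpure E ((hs E).mp hE)]; norm_num)
    exact ⟨a, Δ.down_closed ((hs E).mp hE).1 (Finset.singleton_subset_iff.mpr ha), ha⟩
  obtain ⟨a, ha, haE₀⟩ := hvertex (hts hE₀)
  obtain ⟨b, hb, hbE₁⟩ := hvertex (Finset.mem_sdiff.mp hE₁).1
  by_cases hbt : ∃ E' ∈ t, b ∈ E'
  · obtain ⟨E', hE', hbE'⟩ := hbt
    exact ⟨E₁, hE₁, E', hE', b, Finset.mem_inter.mpr ⟨hbE₁, hbE'⟩⟩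
  obtain ⟨x, y, ⟨E', hE', hxE'⟩, hy, hxy⟩ :=
    (hconn a b ha hb).exists_boundary (p := fun v => ∃ E' ∈ t, v ∈ E') ⟨E₀, hE₀, haE₀⟩ hbt
  have hxy_ne : x ≠ y := by rintro rfl; exact hy ⟨E', hE', hxE'⟩
  have hedge : {x, y} ∈ s := (hs _).mpr (isFacet_of_card_eq hpure hxy (Finset.card_pair hxy_ne))
  exact ⟨{x, y}, Finset.mem_sdiff.mpr ⟨hedge, fun hxyt => hy ⟨_, hxyt, by simp⟩⟩,
    E', hE', x, by simp [hxE']⟩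

end SimplicialComplex

open SimplicialComplex in
theorem pure_one_dimensional_connected_iff_shellable_general {V : Type*}
    [Fintype V] [DecidableEq V] (Δ : SimplicialComplex V)
    (hpure : ∀ F, Δ.IsFacet F → F.card = 2) :
    Δ.IsConnected ↔ Δ.IsShellable := by
  rw [isShellable_iff_exists_isConnectedOrdering hpure]
  refine ⟨fun hconn => ?_,
    fun ⟨_, _, _, hfacets, hord⟩ => isConnected_of_isConnectedOrdering hfacets hord⟩
  obtain ⟨s, hs⟩ : ∃ s : Finset (Finset V), ∀ E, E ∈ s ↔ Δ.IsFacet E :=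
    ⟨_, fun _ => (Set.toFinite {G | Δ.IsFacet G}).mem_toFinset⟩
  obtain ⟨f, hfs, hord⟩ :=
    Finset.exists_embedding_fin_isConnectedOrdering (hconn.exists_mem_sdiff_inter_nonempty hpure hs)
  refine ⟨s.card, f, f.injective, fun G => ?_, hord⟩
  rw [← hs, ← Finset.mem_coe, ← hfs, Set.mem_range]

open SimplicialComplex in
/-- a (nonempty, finite) pure one-dimensional simplicial complex
(every facet has exactly two vertices) is connected iff it is shellable. -/
theorem pure_one_dimensional_connected_iff_shellable {V : Type*}
    [Fintype V] [DecidableEq V] (Δ : SimplicialComplex V)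
    (hne : Δ.faces.Nonempty) (hpure : ∀ F, Δ.IsFacet F → F.card = 2) :
    Δ.IsConnected ↔ Δ.IsShellable :=
  pure_one_dimensional_connected_iff_shellable_general Δ hpure
end

section
/- For a hypergraph H and positive integers s_1,...,s_n, the independence complex of the expansion hypergraph equals the expansion of the independence complex: Δ_{H^{(s_1,...,s_n)}} = (Δ_H)^{(s_1,...,s_n)}. -/
open Finset

/-- A simple hypergraph on the vertex set `Fin n`: every edge has at least two
vertices and no edge contains another. -/
structure SimpleHypergraph (n : ℕ) where
  edges : Set (Finset (Fin n))
  two_le_card : ∀ E ∈ edges, 2 ≤ E.card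
  antichain : ∀ E ∈ edges, ∀ E' ∈ edges, E ⊆ E' → E = E'

namespace SimpleHypergraph

/-- The independence complex of a hypergraph: faces are the sets containing no edge. -/
def indepComplex {n : ℕ} (H : SimpleHypergraph n) : SimplicialComplex (Fin n) where
  faces := {F | ∀ E ∈ H.edges, ¬ E ⊆ F}
  down_closed := fun _F _G hF hG E hE hEG => hF E hE (hEG.trans hG)

/-- The edges of the `(s 0, …, s (n-1))`-expansion hypergraph `H^{(s₁,…,sₙ)}`:
copies (with indices `< s i`) of the edges of `H` (one copy of each vertex,
chosen arbitrarily), together with all pairs of distinct copies of a common vertex. -/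
def expansionEdge {n : ℕ} (H : SimpleHypergraph n) (s : Fin n → ℕ)
    (E : Finset (Fin n × ℕ)) : Prop :=
  ((∀ p ∈ E, p.2 < s p.1) ∧ (∀ p ∈ E, ∀ q ∈ E, p.1 = q.1 → p = q) ∧
      E.image Prod.fst ∈ H.edges) ∨
  (∃ i j k, j ≠ k ∧ j < s i ∧ k < s i ∧ E = {(i, j), (i, k)})

/-- The independence complex of the expansion hypergraph `H^{(s₁,…,sₙ)}`:
subsets of the vertex set `{(i, j) | j < s i}` of `H^{(s₁,…,sₙ)}` containing
none of its edges. -/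
def indepComplexExpansion {n : ℕ} (H : SimpleHypergraph n) (s : Fin n → ℕ) :
    SimplicialComplex (Fin n × ℕ) where
  faces := {F | (∀ p ∈ F, p.2 < s p.1) ∧
    ∀ E : Finset (Fin n × ℕ), expansionEdge H s E → ¬ E ⊆ F}
  down_closed := fun _F _G hF hG =>
    ⟨fun p hp => hF.1 p (hG hp), fun E hE hEG => hF.2 E hE (hEG.trans hG)⟩

end SimpleHypergraph

lemma SimplicialComplex.faces_ext {V : Type*} {Δ₁ Δ₂ : SimplicialComplex V}
    (h : Δ₁.faces = Δ₂.faces) : Δ₁ = Δ₂ := by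
  cases Δ₁; cases Δ₂; cases h; rfl

open SimplicialComplex SimpleHypergraph in
/-- for a hypergraph `H` and positive integers `s₁,…,sₙ`, the
independence complex of the expansion hypergraph equals the expansion of the
independence complex: `Δ_{H^{(s₁,…,sₙ)}} = (Δ_H)^{(s₁,…,sₙ)}`. -/
theorem indepComplex_expansion_eq {n : ℕ} (H : SimpleHypergraph n)
    (s : Fin n → ℕ) (hs : ∀ i, 0 < s i) :
    H.indepComplexExpansion s = H.indepComplex.expansion s := by
  have : (H.indepComplexExpansion s).faces = (H.indepComplex.expansion s).faces := by
    ext F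
    constructor
    · rintro ⟨hb, hno⟩
      have hinj : ∀ p ∈ F, ∀ q ∈ F, p.1 = q.1 → p = q := by
        intro p hp q hq h1
        by_contra hne
        have h2 : p.2 ≠ q.2 := by
          intro h2; exact hne (Prod.ext h1 h2)
        refine hno {p, q} (Or.inr ⟨p.1, p.2, q.2, h2, hb p hp, h1 ▸ hb q hq, ?_⟩) ?_
        · have hq : (p.1, q.2) = q := Prod.ext h1 rfl
          rw [Prod.mk.eta, hq]
        · intro x hx
          simp only [Finset.mem_insert, Finset.mem_singleton] at hx
          rcases hx with rfl | rfl <;> assumption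
      refine ⟨?_, hb, hinj⟩
      intro E hE hEF
      set E' := F.filter (fun p => p.1 ∈ E) with hE'
      have hE'F : E' ⊆ F := Finset.filter_subset _ _
      have himg : E'.image Prod.fst = E := by
        apply Finset.Subset.antisymm
        · intro i hi
          simp only [Finset.mem_image] at hi
          obtain ⟨p, hp, rfl⟩ := hi
          exact (Finset.mem_filter.mp hp).2
        · intro i hi
          have := hEF hi
          simp only [Finset.mem_image] at this ⊢
          obtain ⟨p, hp, rfl⟩ := this
          exact ⟨p, Finset.mem_filter.mpr ⟨hp, hi⟩, rfl⟩
      exact hno E' (Or.inl ⟨fun p hp => hb p (hE'F hp),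
        fun p hp q hq => hinj p (hE'F hp) q (hE'F hq), himg ▸ hE⟩) hE'F
    · rintro ⟨hind, hb, hinj⟩
      refine ⟨hb, ?_⟩
      rintro E (⟨_, _, hE⟩ | ⟨i, j, k, hjk, _, _, rfl⟩) hEF
      · exact hind _ hE (Finset.image_subset_image hEF)
      · have h1 : (i, j) ∈ F := hEF (by simp)
        have h2 : (i, k) ∈ F := hEF (by simp)
        exact hjk (congrArg Prod.snd (hinj _ h1 _ h2 rfl))
  exact SimplicialComplex.faces_ext this
end
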